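/- arXiv:2106.02564 — 5 statements merged into one kernel-verified Lean document; each statement's English description precedes it below -/
import Mathlib

section
/- Let V be a real inner product space. For a nonzero vector v ∈ V and a scalar c ∈ ℝ, let ρ_{v,c} : V → V denote the affine reflection across the affine hyperplane {x ∈ V : ⟪x, v⟫ = c}, given by ρ_{v,c}(x) = x − (2(⟪x, v⟫ − c)/⟪v, v⟫) • v. If v₁, v₂ ∈ V are nonzero, c₁, c₂ ∈ ℝ, and there is a point μ ∈ V with ρ_{v₁,c₁}(μ) = ρ_{v₂,c₂}(μ) and ρ_{v₁,c₁}(μ) ≠ μ, then ρ_{v₁,c₁} = ρ_{v₂,c₂} as maps V → V. -/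
open scoped RealInnerProductSpace

/-- The affine reflection across the affine hyperplane `{x : V | ⟪x, v⟫ = c}`. -/
noncomputable def affineReflection {V : Type*} [NormedAddCommGroup V] [InnerProductSpace ℝ V]
    (v : V) (c : ℝ) (x : V) : V :=
  x - ((2 * (⟪x, v⟫ - c)) / ⟪v, v⟫) • v

/-!
A reflection `ρ` that moves a point `μ` is determined by the pair `(μ, ρ μ)`: its mirror is the
perpendicular bisector of `μ` and `ρ μ`, i.e. `ρ = ρ_{w, ⟪μ + ρ μ, w⟫ / 2}` with `w = μ - ρ μ`,
because `w` is a nonzero multiple of the normal vector, the midpoint lies on the mirror, and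
rescaling the equation of the mirror does not change the reflection.
-/

section

variable {V : Type*} [NormedAddCommGroup V] [InnerProductSpace ℝ V]

theorem affineReflection_smul {t : ℝ} (ht : t ≠ 0) (v : V) (c : ℝ) :
    affineReflection (t • v) (t * c) = affineReflection v c := by
  funext x
  simp only [affineReflection, real_inner_smul_left, real_inner_smul_right, smul_smul]
  congr 2
  rcases eq_or_ne v 0 with rfl | hv
  · simp
  · have hvv : ⟪v, v⟫ ≠ 0 := inner_self_ne_zero.mpr hv
    field_simp

theorem self_sub_affineReflection (v : V) (c : ℝ) (μ : V) :
    μ - affineReflection v c μ = (2 * (⟪μ, v⟫ - c) / ⟪v, v⟫) • v :=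
  sub_sub_cancel _ _

theorem ne_zero_of_affineReflection_apply_ne {v : V} {c : ℝ} {μ : V}
    (h : affineReflection v c μ ≠ μ) : v ≠ 0 := by
  rintro rfl
  simp [affineReflection] at h

theorem inner_add_affineReflection {v : V} (hv : v ≠ 0) (c : ℝ) (μ : V) :
    ⟪μ + affineReflection v c μ, v⟫ = 2 * c := by
  have hvv : ⟪v, v⟫ ≠ 0 := inner_self_ne_zero.mpr hv
  simp only [affineReflection, inner_add_left, inner_sub_left, real_inner_smul_left]
  field_simp
  ring

theorem affineReflection_eq_of_apply_ne {v : V} {c : ℝ} {μ : V}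
    (h : affineReflection v c μ ≠ μ) :
    affineReflection v c =
      affineReflection (μ - affineReflection v c μ)
        (⟪μ + affineReflection v c μ, μ - affineReflection v c μ⟫ / 2) := by
  have hv := ne_zero_of_affineReflection_apply_ne h
  set a := 2 * (⟪μ, v⟫ - c) / ⟪v, v⟫ with ha_def
  have ha : a ≠ 0 := by
    intro ha
    apply h
    rw [affineReflection, ← ha_def, ha, zero_smul, sub_zero]
  rw [self_sub_affineReflection, ← ha_def, real_inner_smul_right, inner_add_affineReflection hv,
    mul_div_assoc, mul_div_cancel_left₀ c two_ne_zero, affineReflection_smul ha]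

end

theorem affineReflection_eq_of_eq_of_ne_general {V : Type*} [NormedAddCommGroup V]
    [InnerProductSpace ℝ V] {v₁ v₂ : V} (c₁ c₂ : ℝ) (μ : V)
    (heq : affineReflection v₁ c₁ μ = affineReflection v₂ c₂ μ)
    (hne : affineReflection v₁ c₁ μ ≠ μ) :
    affineReflection v₁ c₁ = affineReflection v₂ c₂ := by
  have hne₂ : affineReflection v₂ c₂ μ ≠ μ := heq ▸ hne
  rw [affineReflection_eq_of_apply_ne hne, affineReflection_eq_of_apply_ne hne₂, heq]

/-- If two affine reflections of a real inner product space agree at a point which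
one of them does not fix, then they are equal as maps. -/
theorem affineReflection_eq_of_eq_of_ne {V : Type*} [NormedAddCommGroup V]
    [InnerProductSpace ℝ V] {v₁ v₂ : V} (hv₁ : v₁ ≠ 0) (hv₂ : v₂ ≠ 0) (c₁ c₂ : ℝ) (μ : V)
    (heq : affineReflection v₁ c₁ μ = affineReflection v₂ c₂ μ)
    (hne : affineReflection v₁ c₁ μ ≠ μ) :
    affineReflection v₁ c₁ = affineReflection v₂ c₂ :=
  affineReflection_eq_of_eq_of_ne_general c₁ c₂ μ heq hne
end

section
/- Let n ≥ 1 and let μ : Fin (n+1) → ℤ. Let α : Fin (n+1) → ℤ be the vector with α(n−1) = 1, α(n) = −1, and α(i) = 0 otherwise (the simple root α_n of type A_n in the standard realization). Then either μ(n) = μ(n−1) + 1 (equivalently ⟨μ, α_n∨⟩ = −1, so that s_n(μ) = μ + α_n), or there exists a permutation σ of Fin (n+1) such that both i ↦ μ(σ(i)) and i ↦ μ(σ(i)) + α(σ(i)) are weakly decreasing functions of i. -/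
/-- For any weight `μ` in the standard realization of the type `A_n` weight lattice inside
`ℤ^{n+1}`, with `α_n = e_{n-1} - e_n` the last simple root: either `μ(n) = μ(n-1) + 1`
(i.e. `s_n(μ) = μ + α_n`), or some permutation of the coordinates makes both `μ` and
`μ + α_n` simultaneously weakly decreasing (dominant). -/
theorem typeA_weight_lemma (n : ℕ) (hn : 1 ≤ n) (μ : Fin (n + 1) → ℤ)
    (α : Fin (n + 1) → ℤ)
    (hα : α = fun i : Fin (n + 1) =>
      if (i : ℕ) = n - 1 then 1 else if (i : ℕ) = n then -1 else 0) :
    μ ⟨n, Nat.lt_succ_self n⟩ = μ ⟨n - 1, by omega⟩ + 1 ∨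
      ∃ σ : Equiv.Perm (Fin (n + 1)),
        Antitone (fun i => μ (σ i)) ∧ Antitone (fun i => μ (σ i) + α (σ i)) := by
  by_cases h : μ ⟨n, Nat.lt_succ_self n⟩ = μ ⟨n - 1, by omega⟩ + 1
  · exact Or.inl h
  right
  set i0 : Fin (n + 1) := ⟨n - 1, by omega⟩ with hi0
  set i1 : Fin (n + 1) := ⟨n, Nat.lt_succ_self n⟩ with hi1
  -- basic facts about α
  have haval : ∀ z : Fin (n + 1), α z = -1 ∨ α z = 0 ∨ α z = 1 := by
    intro z; simp only [hα]; split_ifs <;> simp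
  have hneg : ∀ z : Fin (n + 1), α z = -1 → z = i1 := by
    intro z hz
    have hz' : (z : ℕ) = n := by
      simp only [hα] at hz; split_ifs at hz <;> omega
    exact Fin.ext (by simp [hi1, hz'])
  have hpos : ∀ z : Fin (n + 1), α z = 1 → z = i0 := by
    intro z hz
    have hz' : (z : ℕ) = n - 1 := by
      simp only [hα] at hz; split_ifs at hz <;> omega
    exact Fin.ext (by simp [hi0, hz'])
  -- key function: sort by -3μ with tiebreaks (-α)
  set k : Fin (n + 1) → ℤ := fun i => -3 * μ i - α i with hk
  have key : ∀ x y : Fin (n + 1), k x ≤ k y →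
      μ y ≤ μ x ∧ μ y + α y ≤ μ x + α x := by
    intro x y hxy
    simp only [hk] at hxy
    rcases haval x with hax | hax | hax <;> rcases haval y with hay | hay | hay
    all_goals (try (rw [hax, hay] at hxy ⊢; constructor <;> omega))
    -- remaining crucial case: α x = -1, α y = 1
    have hx := hneg x hax
    have hy := hpos y hay
    subst hx; subst hy
    rw [hax, hay] at hxy ⊢
    constructor <;> omega
  refine ⟨Tuple.sort k, ?_, ?_⟩
  · intro i j hij
    exact (key _ _ (Tuple.monotone_sort k hij)).1
  · intro i j hij
    exact (key _ _ (Tuple.monotone_sort k hij)).2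
end

section
/- Let n ≥ 1 and let S ⊆ Fin (n+1). For a type A_n root γ = e_j − e_k (j ≠ k, where e_j : Fin (n+1) → ℤ is the j-th standard basis vector), write f_S(γ) = Σ_{i ∈ S} γ(i). Suppose α = e_{j₁} − e_{k₁}, β = e_{j₂} − e_{k₂}, and γ = e_{j₃} − e_{k₃} are three type A_n roots such that γ = ε₁ • α + ε₂ • β for some signs ε₁, ε₂ ∈ {1, −1}. If f_S(α) ≠ 0 and f_S(β) ≠ 0, then f_S(γ) = 0. -/
/-- The `j`-th standard basis vector of `ℤ^m`. -/
def stdBasisVec {m : ℕ} (j : Fin m) : Fin m → ℤ := fun i => if i = j then 1 else 0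

lemma sum_root (m : ℕ) (S : Finset (Fin m)) (j k : Fin m) :
    ∑ i ∈ S, (stdBasisVec j - stdBasisVec k) i =
      (if j ∈ S then (1 : ℤ) else 0) - (if k ∈ S then 1 else 0) := by
  simp only [Pi.sub_apply, stdBasisVec, Finset.sum_sub_distrib,
    Finset.sum_ite_eq' S, Finset.sum_ite_eq]

/-- If a type `A_n` root `γ = e_{j₃} - e_{k₃}` is a signed sum `γ = ε₁ • α + ε₂ • β` of two
type `A_n` roots `α = e_{j₁} - e_{k₁}` and `β = e_{j₂} - e_{k₂}`, and neither `α` nor `β` lies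
in the kernel of the functional `f_S(x) = ∑_{i ∈ S} x(i)`, then `γ` does. -/
theorem typeA_signed_sum_lemma (n : ℕ) (hn : 1 ≤ n) (S : Finset (Fin (n + 1)))
    (j₁ k₁ j₂ k₂ j₃ k₃ : Fin (n + 1))
    (h₁ : j₁ ≠ k₁) (h₂ : j₂ ≠ k₂) (h₃ : j₃ ≠ k₃)
    (ε₁ ε₂ : ℤ) (hε₁ : ε₁ = 1 ∨ ε₁ = -1) (hε₂ : ε₂ = 1 ∨ ε₂ = -1)
    (hγ : stdBasisVec j₃ - stdBasisVec k₃ =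
      ε₁ • (stdBasisVec j₁ - stdBasisVec k₁) + ε₂ • (stdBasisVec j₂ - stdBasisVec k₂))
    (hα : ∑ i ∈ S, (stdBasisVec j₁ - stdBasisVec k₁) i ≠ 0)
    (hβ : ∑ i ∈ S, (stdBasisVec j₂ - stdBasisVec k₂) i ≠ 0) :
    ∑ i ∈ S, (stdBasisVec j₃ - stdBasisVec k₃) i = 0 := by
  have key : ∑ i ∈ S, (stdBasisVec j₃ - stdBasisVec k₃) i =
      ε₁ * ∑ i ∈ S, (stdBasisVec j₁ - stdBasisVec k₁) i +
      ε₂ * ∑ i ∈ S, (stdBasisVec j₂ - stdBasisVec k₂) i := by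
    rw [Finset.mul_sum, Finset.mul_sum, ← Finset.sum_add_distrib]
    refine Finset.sum_congr rfl fun i _ => ?_
    have := congrFun hγ i
    simpa using this
  rw [sum_root] at hα hβ ⊢
  rw [sum_root, sum_root, sum_root] at key
  split_ifs at * <;> omega
end

section
/- Let (W, S) be a Coxeter system with length function ℓ, let J ⊆ S, and let W_J be the standard parabolic subgroup of W generated by J. Let x ∈ W be an element of minimal length in its coset x·W_J, i.e. ℓ(x) ≤ ℓ(w) for all w ∈ x·W_J. If t₁ and t₂ are reflections of W (conjugates of elements of S) such that ℓ(t₁x) < ℓ(x), ℓ(t₂x) < ℓ(x), and t₁x·W_J = t₂x·W_J, then t₁ = t₂. -/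
/-!
Write `x` as a reduced word `ω`. By the strong exchange condition every reflection `t` with
`ℓ(t x) < ℓ(x)` occurs in the left inversion sequence of `ω`, and `t x` is `ω` with the
corresponding letter deleted. If `t₁ ≠ t₂` occur at positions `j < k` (or `k < j`), deleting
both letters shows that `t₂ t₁ x` (or `t₁ t₂ x`) is shorter than `x`. But `t₁ x W_J = t₂ x W_J`
gives `t₁ t₂ x = x c` and `t₂ t₁ x = x c⁻¹` with `c ∈ W_J`, contradicting the minimality of `x`.

Strong exchange comes from Björner–Brenti's action of `W` on reflections with signs, in which
`s` negates the sign of `s` only; the sign that `π ω` attaches to `t` is `-1` to the number of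
occurrences of `t` in the right inversion sequence of `ω`.
-/

theorem mul_mul_inv_eq_iff_eq_inv_mul_mul {G : Type*} [Group G] {a w b : G} :
    a * w * a⁻¹ = b ↔ w = a⁻¹ * b * a := by
  constructor <;> rintro rfl <;> group

namespace CoxeterSystem

variable {B W : Type*} [Group W] {M : CoxeterMatrix B} (cs : CoxeterSystem M W)

local prefix:100 "s" => cs.simple
local prefix:100 "π" => cs.wordProd
local prefix:100 "ℓ" => cs.length
local prefix:100 "ris " => cs.rightInvSeq
local prefix:100 "lis " => cs.leftInvSeq

theorem simple_mul_mul_simple_eq_simple_iff (i : B) (w : W) : s i * w * s i = s i ↔ w = s i := by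
  rw [mul_eq_right, mul_eq_one_iff_inv_eq, inv_simple, eq_comm]

-- Defined on all of `W × ℤˣ` rather than on reflections, which avoids a subtype.
open scoped Classical in
noncomputable def reflectionSignPerm (i : B) : Equiv.Perm (W × ℤˣ) :=
  Function.Involutive.toPerm
    (fun p => (s i * p.1 * s i, if p.1 = s i then -p.2 else p.2))
    (by
      rintro ⟨w, ε⟩
      by_cases h : w = s i
      · simp [h]
      · simp only [simple_mul_mul_simple_eq_simple_iff, h, if_false]
        simp [mul_assoc])

open scoped Classical in
theorem reflectionSignPerm_apply (i : B) (w : W) (ε : ℤˣ) :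
    cs.reflectionSignPerm i (w, ε) = (s i * w * s i, if w = s i then -ε else ε) := rfl

theorem simple_mul_simple_pow_conj (i j : B) (k n : ℕ) :
    ((s i * s j) ^ k)⁻¹ * (s j * (s i * s j) ^ n) * (s i * s j) ^ k =
      s j * (s i * s j) ^ (n + 2 * k) := by
  have : ((s i * s j) ^ k)⁻¹ * s j = s j * (s i * s j) ^ k := by
    rw [← inv_pow, mul_inv_rev, inv_simple, inv_simple, mul_pow_mul]
  rw [← mul_assoc, this, mul_assoc (s j), ← pow_add, mul_assoc, ← pow_add]
  congr 2
  ring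

open scoped Classical in
theorem reflectionSignPerm_mul_pow_apply (i j : B) (k : ℕ) (w : W) (ε : ℤˣ) :
    ((cs.reflectionSignPerm i * cs.reflectionSignPerm j) ^ k) (w, ε) =
      ((s i * s j) ^ k * w * ((s i * s j) ^ k)⁻¹,
        ε * ∏ r ∈ Finset.range (2 * k), if w = s j * (s i * s j) ^ r then -1 else 1) := by
  induction k generalizing ε with
  | zero => simp
  | succ k ih =>
    set g := s i * s j
    have h₀ : g ^ k * w * (g ^ k)⁻¹ = s j ↔ w = s j * g ^ (2 * k) := by
      have key := simple_mul_simple_pow_conj cs i j k 0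
      rw [pow_zero, mul_one, zero_add] at key
      rw [mul_mul_inv_eq_iff_eq_inv_mul_mul, key]
    have h₁ : s j * (g ^ k * w * (g ^ k)⁻¹) * s j = s i ↔ w = s j * g ^ (2 * k + 1) := by
      rw [show s j * (g ^ k * w * (g ^ k)⁻¹) * s j = (s j * g ^ k) * w * (s j * g ^ k)⁻¹ by
          simp [mul_assoc],
        mul_mul_inv_eq_iff_eq_inv_mul_mul, add_comm, ← simple_mul_simple_pow_conj cs i j k 1]
      simp [g, mul_assoc]
    rw [pow_succ', Equiv.Perm.mul_apply, ih, Equiv.Perm.mul_apply, reflectionSignPerm_apply,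
      reflectionSignPerm_apply, h₀, h₁, Nat.mul_succ, Finset.prod_range_succ,
      Finset.prod_range_succ, Prod.mk.injEq]
    constructor
    · simp [g, pow_succ', mul_assoc]
    · split_ifs <;> simp

-- The reflections `s j * (s i * s j) ^ r` are `M i j`-periodic in `r`, so among the first
-- `2 * M i j` of them each one occurs an even number of times.
theorem isLiftable_reflectionSignPerm : M.IsLiftable cs.reflectionSignPerm := by
  classical
  intro i j
  ext ⟨w, ε⟩ : 1
  have periodic (r : ℕ) : s j * (s i * s j) ^ (M i j + r) = s j * (s i * s j) ^ r := by
    rw [pow_add, simple_mul_simple_pow, one_mul]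
  rw [reflectionSignPerm_mul_pow_apply, simple_mul_simple_pow, two_mul, Finset.prod_range_add]
  simp only [periodic, Int.units_mul_self]
  simp

noncomputable def reflectionSignRep : W →* Equiv.Perm (W × ℤˣ) :=
  cs.lift ⟨cs.reflectionSignPerm, cs.isLiftable_reflectionSignPerm⟩

open scoped Classical in
theorem reflectionSignRep_wordProd_apply (ω : List B) (w : W) (ε : ℤˣ) :
    cs.reflectionSignRep (π ω) (w, ε) =
      (π ω * w * (π ω)⁻¹, ε * (-1) ^ (ris ω).count w) := by
  induction ω generalizing w ε with
  | nil => simp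
  | cons i ω ih =>
    have hcond : π ω * w * (π ω)⁻¹ = s i ↔ (π ω)⁻¹ * s i * π ω = w := by
      rw [mul_mul_inv_eq_iff_eq_inv_mul_mul, eq_comm]
    rw [wordProd_cons, map_mul, Equiv.Perm.mul_apply, ih, reflectionSignRep,
      lift_apply_simple, reflectionSignPerm_apply, rightInvSeq.eq_2, List.count_cons, hcond,
      Prod.mk.injEq]
    constructor
    · simp [mul_assoc]
    · by_cases h : (π ω)⁻¹ * s i * π ω = w <;> simp [h, pow_succ]

theorem reflectionSignRep_apply_fst (v w : W) (ε : ℤˣ) :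
    (cs.reflectionSignRep v (w, ε)).1 = v * w * v⁻¹ := by
  obtain ⟨ω, rfl⟩ := cs.wordProd_surjective v
  rw [reflectionSignRep_wordProd_apply]

theorem reflectionSignRep_apply_neg (v w : W) (ε : ℤˣ) :
    cs.reflectionSignRep v (w, -ε) =
      ((cs.reflectionSignRep v (w, ε)).1, -(cs.reflectionSignRep v (w, ε)).2) := by
  obtain ⟨ω, rfl⟩ := cs.wordProd_surjective v
  simp [reflectionSignRep_wordProd_apply]

theorem reflectionSignRep_apply_self {t : W} (ht : cs.IsReflection t) (ε : ℤˣ) :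
    cs.reflectionSignRep t (t, ε) = (t, -ε) := by
  obtain ⟨v, i, rfl⟩ := ht
  set p := cs.reflectionSignRep v⁻¹ (v * s i * v⁻¹, ε)
  have hp : p = (s i, p.2) := by
    rw [Prod.ext_iff, reflectionSignRep_apply_fst]; simp [p]; group
  calc cs.reflectionSignRep (v * s i * v⁻¹) (v * s i * v⁻¹, ε)
      = cs.reflectionSignRep v (cs.reflectionSignRep (s i) p) := by simp [p]
    _ = cs.reflectionSignRep v (s i, -p.2) := by
      rw [hp, reflectionSignRep, lift_apply_simple, reflectionSignPerm_apply]; simp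
    _ = (v * s i * v⁻¹, -ε) := by
      rw [reflectionSignRep_apply_neg, ← hp]; simp [p]

theorem mem_rightInvSeq_of_isRightInversion {ω : List B} {t : W}
    (ht : cs.IsRightInversion (π ω) t) : t ∈ ris ω := by
  classical
  by_contra hmem
  obtain ⟨α, hα, hαω⟩ := cs.exists_isReduced (π ω * t)
  have hsign : cs.reflectionSignRep (π ω) (t, 1) = cs.reflectionSignRep (π α) (t, -1) := by
    rw [← hαω, ← reflectionSignRep_apply_self cs ht.1, ← Equiv.Perm.mul_apply, ← map_mul,
      mul_assoc, ht.1.mul_self, mul_one]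
  have hmemα : t ∈ ris α := by
    rw [← List.count_pos_iff, Nat.pos_iff_ne_zero]
    intro h
    simp [reflectionSignRep_wordProd_apply, List.count_eq_zero.mpr hmem, h] at hsign
  have hlt := (cs.isRightInversion_of_mem_rightInvSeq hα hmemα).2
  rw [← hαω, mul_assoc, ht.1.mul_self, mul_one] at hlt
  exact lt_asymm hlt ht.2

theorem mem_leftInvSeq_of_isLeftInversion {ω : List B} {t : W}
    (ht : cs.IsLeftInversion (π ω) t) : t ∈ lis ω := by
  rw [← List.mem_reverse, ← rightInvSeq_reverse]
  apply cs.mem_rightInvSeq_of_isRightInversion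
  rwa [wordProd_reverse, ← isLeftInversion_inv_iff, inv_inv]

theorem getD_leftInvSeq_eraseIdx_of_lt (ω : List B) {j k : ℕ} (h : j < k) :
    (lis (ω.eraseIdx k)).getD j 1 = (lis ω).getD j 1 := by
  rw [getD_leftInvSeq, getD_leftInvSeq, List.take_eraseIdx_eq_take_of_le _ _ _ h.le,
    List.getElem?_eraseIdx_of_lt h]

theorem length_getD_leftInvSeq_mul_getD_leftInvSeq_mul_lt {ω : List B} (hω : cs.IsReduced ω)
    {j k : ℕ} (hjk : j < k) (hk : k < ω.length) :
    ℓ ((lis ω).getD j 1 * ((lis ω).getD k 1 * π ω)) < ℓ (π ω) := by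
  rw [getD_leftInvSeq_mul_wordProd, ← getD_leftInvSeq_eraseIdx_of_lt cs ω hjk,
    getD_leftInvSeq_mul_wordProd, hω]
  calc _ ≤ ((ω.eraseIdx k).eraseIdx j).length := cs.length_wordProd_le _
    _ < ω.length := by
      rw [List.length_eraseIdx_of_lt (by rw [List.length_eraseIdx_of_lt hk]; omega),
        List.length_eraseIdx_of_lt hk]
      omega

theorem length_mul_mul_lt_of_isLeftInversion_of_ne {w t₁ t₂ : W}
    (h₁ : cs.IsLeftInversion w t₁) (h₂ : cs.IsLeftInversion w t₂) (hne : t₁ ≠ t₂) :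
    ℓ (t₁ * (t₂ * w)) < ℓ w ∨ ℓ (t₂ * (t₁ * w)) < ℓ w := by
  obtain ⟨ω, hω, rfl⟩ := cs.exists_isReduced w
  obtain ⟨k₁, hk₁, rfl⟩ := List.getElem_of_mem (cs.mem_leftInvSeq_of_isLeftInversion h₁)
  obtain ⟨k₂, hk₂, rfl⟩ := List.getElem_of_mem (cs.mem_leftInvSeq_of_isLeftInversion h₂)
  rw [← List.getD_eq_getElem _ 1 hk₁, ← List.getD_eq_getElem _ 1 hk₂]
  rw [length_leftInvSeq] at hk₁ hk₂
  rcases lt_or_gt_of_ne (fun h : k₁ = k₂ => hne (by subst h; rfl)) with h | h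
  · exact .inl (cs.length_getD_leftInvSeq_mul_getD_leftInvSeq_mul_lt hω h hk₂)
  · exact .inr (cs.length_getD_leftInvSeq_mul_getD_leftInvSeq_mul_lt hω h hk₁)

end CoxeterSystem

open scoped Pointwise

/-- Let `x` be an element of minimal length in its coset `x • W_J` of a standard parabolic
subgroup `W_J` of a Coxeter group `W`. If two reflections `t₁, t₂` both shorten `x` and
`t₁ x W_J = t₂ x W_J`, then `t₁ = t₂`. -/
theorem reflections_eq_of_shorten_min_coset_rep {B W : Type*} [Group W] {M : CoxeterMatrix B}
    (cs : CoxeterSystem M W) (J : Set B) (x : W)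
    (hx : ∀ w ∈ x • (Subgroup.closure (cs.simple '' J) : Set W), cs.length x ≤ cs.length w)
    (t₁ t₂ : W) (ht₁ : cs.IsReflection t₁) (ht₂ : cs.IsReflection t₂)
    (hl₁ : cs.length (t₁ * x) < cs.length x) (hl₂ : cs.length (t₂ * x) < cs.length x)
    (hcoset : (t₁ * x) • (Subgroup.closure (cs.simple '' J) : Set W) =
      (t₂ * x) • (Subgroup.closure (cs.simple '' J) : Set W)) :
    t₁ = t₂ := by
  set H := Subgroup.closure (cs.simple '' J)
  have hc : x⁻¹ * (t₁ * (t₂ * x)) ∈ H := by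
    simpa [mul_assoc, ht₁.inv] using (leftCoset_eq_iff H).mp hcoset
  have h₁₂ : t₁ * (t₂ * x) ∈ x • (H : Set W) := (mem_leftCoset_iff x).mpr hc
  have h₂₁ : t₂ * (t₁ * x) ∈ x • (H : Set W) := by
    refine (mem_leftCoset_iff x).mpr ?_
    convert H.inv_mem hc using 1
    simp [mul_assoc, ht₁.inv, ht₂.inv]
  by_contra hne
  rcases cs.length_mul_mul_lt_of_isLeftInversion_of_ne ⟨ht₁, hl₁⟩ ⟨ht₂, hl₂⟩ hne with h | h
  · exact (hx _ h₁₂).not_gt h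
  · exact (hx _ h₂₁).not_gt h
end

section
/- Let n ≥ 2 and let W be the Coxeter group of affine type Ã_n, i.e. the Coxeter group with generators s₀, s₁, …, s_n and Coxeter matrix M given by M(i,i) = 1, M(i,j) = 3 if i and j are adjacent in the (n+1)-cycle (j ≡ i ± 1 mod n+1), and M(i,j) = 2 otherwise. Then for every k ∈ ℕ, the element (s₀s₁⋯s_n)^k has length k(n+1); in particular every prefix of the infinite word s₀s₁⋯s_n s₀s₁⋯s_n ⋯ is a reduced word. -/
/-!
Model `W` by affine permutations of `ℤ`: `sᵢ` exchanges `x` and `x + 1` whenever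
`x ≡ i (mod n + 1)`. These permutations satisfy the relations of `Ã_n`, so `W` acts on `ℤ`.
Every generator moves each integer by at most one, hence `w` moves each integer by at most
`ℓ(w)`. The prefix `s₀ s₁ ⋯ s_{m-1}` sends `m` to `0`, so its length is at
least `m`, i.e. the word is reduced; and `(s₀ ⋯ s_n)^k` is the prefix of length `k(n + 1)`.
-/

open Fin.NatCast

section AffineSwap

variable {N : ℕ}

/-- The inverse is written out so that no hypothesis on `N` is needed: for `N = 1` this is the
translation by one. -/
def affineSwap (a : ZMod N) : Equiv.Perm ℤ where
  toFun x := if (x : ZMod N) = a then x + 1 else if (x : ZMod N) = a + 1 then x - 1 else x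
  invFun x := if (x : ZMod N) = a + 1 then x - 1 else if (x : ZMod N) = a then x + 1 else x
  left_inv x := by dsimp only; split_ifs <;> push_cast at * <;> grind
  right_inv x := by dsimp only; split_ifs <;> push_cast at * <;> grind

theorem affineSwap_apply (a : ZMod N) (x : ℤ) : affineSwap a x =
    if (x : ZMod N) = a then x + 1 else if (x : ZMod N) = a + 1 then x - 1 else x :=
  rfl

theorem abs_affineSwap_sub_le (a : ZMod N) (x : ℤ) : |affineSwap a x - x| ≤ 1 := by
  rw [affineSwap_apply]
  split_ifs <;> simp

variable {a : ZMod N} {x : ℤ}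

theorem affineSwap_apply_of_eq (h : (x : ZMod N) = a) : affineSwap a x = x + 1 :=
  if_pos h

theorem affineSwap_apply_of_ne (h₀ : (x : ZMod N) ≠ a) (h₁ : (x : ZMod N) ≠ a + 1) :
    affineSwap a x = x :=
  (if_neg h₀).trans (if_neg h₁)

variable [Nontrivial (ZMod N)]

theorem affineSwap_apply_of_eq_add_one (h : (x : ZMod N) = a + 1) : affineSwap a x = x - 1 :=
  (if_neg (by simp [h])).trans (if_pos h)

theorem affineSwap_mul_self (a : ZMod N) : affineSwap a * affineSwap a = 1 := by
  -- `grind` does not derive `r + 1 ≠ r` from `1 ≠ 0` in `ZMod N`, so it gets it in that form.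
  have : ∀ r : ZMod N, r + 1 ≠ r := by simp
  ext x
  simp only [Equiv.Perm.mul_apply, affineSwap_apply, Equiv.Perm.one_apply]
  split_ifs <;> push_cast at * <;> grind

theorem affineSwap_inv (a : ZMod N) : (affineSwap a)⁻¹ = affineSwap a :=
  inv_eq_of_mul_eq_one_right (affineSwap_mul_self a)

theorem affineSwap_commute {a b : ZMod N} (hab : b ≠ a + 1) (hba : a ≠ b + 1) :
    Commute (affineSwap a) (affineSwap b) := by
  have : ∀ r : ZMod N, r + 1 ≠ r := by simp
  ext x
  simp only [Equiv.Perm.mul_apply, affineSwap_apply]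
  split_ifs <;> push_cast at * <;> grind

theorem affineSwap_mul_affineSwap_add_one_pow_three (a : ZMod N) (h2 : (2 : ZMod N) ≠ 0) :
    (affineSwap a * affineSwap (a + 1)) ^ 3 = 1 := by
  have : ∀ r : ZMod N, r + 1 ≠ r := by simp
  have : ∀ r : ZMod N, r + 1 + 1 ≠ r := by simpa [add_assoc, one_add_one_eq_two] using h2
  ext x
  simp only [pow_succ, pow_zero, one_mul, Equiv.Perm.mul_apply, Equiv.Perm.one_apply]
  obtain hx | hx | hx | ⟨hx₀, hx₁, hx₂⟩ : (x : ZMod N) = a ∨ (x : ZMod N) = a + 1 ∨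
      (x : ZMod N) = a + 1 + 1 ∨
      ((x : ZMod N) ≠ a ∧ (x : ZMod N) ≠ a + 1 ∧ (x : ZMod N) ≠ a + 1 + 1) := by tauto
  all_goals simp (disch := (push_cast; grind)) only [affineSwap_apply_of_eq,
    affineSwap_apply_of_eq_add_one, affineSwap_apply_of_ne]
  all_goals ring

theorem prod_map_range_affineSwap_apply (m : ℕ) (hx : (x : ZMod N) = m) :
    ((List.range m).map fun i : ℕ => affineSwap (i : ZMod N)).prod x = x - m := by
  induction m generalizing x with
  | zero => simp
  | succ m ih =>
    rw [List.range_succ, List.map_append, List.prod_append, List.map_singleton,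
      List.prod_singleton, Equiv.Perm.mul_apply,
      affineSwap_apply_of_eq_add_one (by push_cast at hx; exact hx),
      ih (by rw [Int.cast_sub, hx]; push_cast; ring)]
    push_cast
    ring

end AffineSwap

namespace CoxeterSystem

variable {B W : Type*} [Group W] {M : CoxeterMatrix B} (cs : CoxeterSystem M W)

theorem lift_wordProd {G : Type*} [Monoid G] {f : B → G} (hf : M.IsLiftable f) (ω : List B) :
    cs.lift ⟨f, hf⟩ (cs.wordProd ω) = (ω.map f).prod := by
  rw [wordProd, map_list_prod, List.map_map]
  exact congrArg List.prod (List.map_congr_left fun i _ => cs.lift_apply_simple hf i)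

theorem abs_apply_sub_le_length (φ : W →* Equiv.Perm ℤ)
    (hφ : ∀ i x, |φ (cs.simple i) x - x| ≤ 1) (w : W) (x : ℤ) :
    |φ w x - x| ≤ cs.length w := by
  obtain ⟨ω, hω, rfl⟩ := cs.exists_isReduced w
  rw [hω]
  clear hω
  induction ω generalizing x with
  | nil => simp
  | cons i ω ih =>
    rw [cs.wordProd_cons, map_mul, Equiv.Perm.mul_apply, List.length_cons]
    calc |φ (cs.simple i) (φ (cs.wordProd ω) x) - x|
        ≤ |φ (cs.simple i) (φ (cs.wordProd ω) x) - φ (cs.wordProd ω) x| +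
          |φ (cs.wordProd ω) x - x| := abs_sub_le _ _ _
      _ ≤ 1 + ω.length := add_le_add (hφ _ _) (ih x)
      _ = _ := by push_cast; ring

theorem wordProd_map_range_mul {N : ℕ} [NeZero N] {M : CoxeterMatrix (Fin N)}
    (cs : CoxeterSystem M W) (k : ℕ) :
    cs.wordProd ((List.range (k * N)).map (Nat.cast : ℕ → Fin N)) =
      cs.wordProd ((List.range N).map (Nat.cast : ℕ → Fin N)) ^ k := by
  induction k with
  | zero => simp
  | succ k ih =>
    rw [add_mul, one_mul, List.range_add, List.map_append, cs.wordProd_append, ih, List.map_map,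
      pow_succ]
    congr 2
    exact List.map_congr_left fun t _ => by simp

end CoxeterSystem

section AffineA

variable {n : ℕ}

theorem finEquiv_natCast (k : ℕ) : ZMod.finEquiv (n + 1) (k : Fin (n + 1)) = (k : ZMod (n + 1)) :=
  rfl

theorem two_ne_zero_zmod (hn : 2 ≤ n) : (2 : ZMod (n + 1)) ≠ 0 := by
  exact_mod_cast (ZMod.natCast_eq_zero_iff 2 (n + 1)).not.mpr
    (Nat.not_dvd_of_pos_of_lt two_pos (by omega))

theorem isLiftable_affineSwap [Nontrivial (ZMod (n + 1))] (h2 : (2 : ZMod (n + 1)) ≠ 0)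
    (M : CoxeterMatrix (Fin (n + 1)))
    (hM : ∀ i j : Fin (n + 1),
      M i j = if i = j then 1 else if j = i + 1 ∨ i = j + 1 then 3 else 2) :
    M.IsLiftable fun i => affineSwap (ZMod.finEquiv (n + 1) i) := by
  set e := ZMod.finEquiv (n + 1)
  intro i j
  show (affineSwap (e i) * affineSwap (e j)) ^ M i j = 1
  rw [hM]
  split_ifs with hij hadj
  · rw [hij, pow_one, affineSwap_mul_self]
  · obtain rfl | rfl := hadj
    · rw [map_add, map_one]
      exact affineSwap_mul_affineSwap_add_one_pow_three _ h2
    · rw [map_add, map_one, ← inv_inj, inv_one, ← inv_pow, mul_inv_rev, affineSwap_inv,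
        affineSwap_inv]
      exact affineSwap_mul_affineSwap_add_one_pow_three _ h2
  · have hcomm : Commute (affineSwap (e i)) (affineSwap (e j)) := by
      refine affineSwap_commute ?_ ?_ <;> rw [← map_one e, ← map_add, e.injective.ne_iff] <;> tauto
    rw [hcomm.mul_pow, sq, sq, affineSwap_mul_self, affineSwap_mul_self, one_mul]

theorem isReduced_map_range_natCast (hn : 2 ≤ n) {W : Type*} [Group W]
    {M : CoxeterMatrix (Fin (n + 1))}
    (hM : ∀ i j : Fin (n + 1),
      M i j = if i = j then 1 else if j = i + 1 ∨ i = j + 1 then 3 else 2)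
    (cs : CoxeterSystem M W) (m : ℕ) :
    cs.IsReduced ((List.range m).map (Nat.cast : ℕ → Fin (n + 1))) := by
  have : Fact (1 < n + 1) := ⟨by omega⟩
  have hlift := isLiftable_affineSwap (two_ne_zero_zmod hn) M hM
  have hmove : cs.lift ⟨_, hlift⟩ (cs.wordProd ((List.range m).map Nat.cast)) m = 0 := by
    rw [cs.lift_wordProd, List.map_map]
    simpa [Function.comp_def, finEquiv_natCast] using
      prod_map_range_affineSwap_apply (N := n + 1) (x := m) m (by simp)
  have hle := cs.abs_apply_sub_le_length (cs.lift ⟨_, hlift⟩)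
    (fun i x => by rw [cs.lift_apply_simple]; exact abs_affineSwap_sub_le _ x)
    (cs.wordProd ((List.range m).map Nat.cast)) m
  rw [hmove, zero_sub, abs_neg, Nat.abs_cast, Nat.cast_le] at hle
  exact le_antisymm (cs.length_wordProd_le _) (by simpa using hle)

end AffineA

/-- In the Coxeter group of affine type `Ã_n` (`n ≥ 2`), with generators `s₀, …, s_n` and
Coxeter matrix entries `1` on the diagonal, `3` for cyclically adjacent indices and `2`
otherwise, the element `(s₀ s₁ ⋯ s_n)^k` has length `k(n+1)`; in particular every prefix of
the infinite word `s₀ s₁ ⋯ s_n s₀ s₁ ⋯ s_n ⋯` is reduced. -/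
theorem affineA_coxeter_element_pow_length (n : ℕ) (hn : 2 ≤ n)
    {W : Type*} [Group W] (M : CoxeterMatrix (Fin (n + 1)))
    (hM : ∀ i j : Fin (n + 1),
      M i j = if i = j then 1 else if j = i + 1 ∨ i = j + 1 then 3 else 2)
    (cs : CoxeterSystem M W) :
    (∀ k : ℕ,
      cs.length ((cs.wordProd ((List.range (n + 1)).map (Nat.cast : ℕ → Fin (n + 1)))) ^ k) =
        k * (n + 1)) ∧
    (∀ m : ℕ, cs.IsReduced ((List.range m).map (Nat.cast : ℕ → Fin (n + 1)))) := by
  have hred := isReduced_map_range_natCast hn hM cs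
  refine ⟨fun k => ?_, hred⟩
  rw [← cs.wordProd_map_range_mul]
  exact (hred (k * (n + 1))).trans (by simp)
end
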